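/- In Picaria, let c be the configuration with c(1,1) = X (the center) and c(0,2) = O (a corner), all other cells empty. Then the state (c, X) with X to move is not in WinningFor X; that is, X cannot win from this two-stone position. -/

import Mathlib

/-- The two players of Picaria. -/
inductive Player : Type
  | X : Player
  | O : Player
deriving DecidableEq

instance instFintypePlayer : Fintype Player :=
  ⟨{Player.X, Player.O}, fun x => by cases x <;> simp⟩

/-- The opponent of a player. -/
def Player.other : Player → Player
  | Player.X => Player.O
  | Player.O => Player.X

/-- A cell of the 3×3 board, written (row, column), 0-indexed. -/
abbrev Cell : Type := Fin 3 × Fin 3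

/-- A configuration assigns to each cell an optional stone. -/
abbrev Config : Type := Cell → Option Player

/-- King-move adjacency on the board: distinct cells whose coordinates
differ by at most 1 each. -/
def adjacent (a b : Cell) : Prop :=
  a ≠ b ∧ |((a.1 : ℕ) : ℤ) - ((b.1 : ℕ) : ℤ)| ≤ 1 ∧
    |((a.2 : ℕ) : ℤ) - ((b.2 : ℕ) : ℤ)| ≤ 1

/-- The 8 lines of the board: 3 rows, 3 columns, 2 main diagonals. -/
def lines : List (Cell × Cell × Cell) :=
  [((0,0),(0,1),(0,2)), ((1,0),(1,1),(1,2)), ((2,0),(2,1),(2,2)),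
   ((0,0),(1,0),(2,0)), ((0,1),(1,1),(2,1)), ((0,2),(1,2),(2,2)),
   ((0,0),(1,1),(2,2)), ((0,2),(1,1),(2,0))]

/-- Player `p` has three-in-a-row in configuration `c`. -/
def threeInARow (c : Config) (p : Player) : Prop :=
  ∃ l ∈ lines, c l.1 = some p ∧ c l.2.1 = some p ∧ c l.2.2 = some p

/-- The number of stones of player `p` on the board. -/
def stoneCount (c : Config) (p : Player) : ℕ :=
  (Finset.univ.filter fun x : Cell => c x = some p).card

/-- Legal moves of player `t` from configuration `c`, producing `c'`:
placement on an empty cell while `t` has fewer than 3 stones on the board;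
otherwise a slide of one of `t`'s stones to an adjacent empty cell. -/
def Move (t : Player) (c c' : Config) : Prop :=
  (stoneCount c t < 3 ∧ ∃ x : Cell, c x = none ∧ c' = Function.update c x (some t)) ∨
  (3 ≤ stoneCount c t ∧ ∃ x y : Cell, c x = some t ∧ c y = none ∧ adjacent x y ∧
    c' = Function.update (Function.update c x none) y (some t))

/-- `WinningFor p` is the least set of states (configuration, player to move) such that:
(i) `(c, p)` is winning for `p` if some legal move of `p` immediately makes a
three-in-a-row for `p`, or leads to a state winning for `p`;
(ii) `(c, q)` (for `q` the opponent of `p`) is winning for `p` if `q` has at least one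
legal move, and every legal move of `q` yields a configuration with no three-in-a-row
for `q` together with a state winning for `p`. -/
inductive WinningFor (p : Player) : Config × Player → Prop
  | moveWin (c c' : Config) (h : Move p c c') (hw : threeInARow c' p) :
      WinningFor p (c, p)
  | moveStep (c c' : Config) (h : Move p c c') (hw : WinningFor p (c', p.other)) :
      WinningFor p (c, p)
  | forced (c : Config) (hne : ∃ c', Move p.other c c')
      (hnowin : ∀ c', Move p.other c c' → ¬ threeInARow c' p.other)
      (hall : ∀ c', Move p.other c c' → WinningFor p (c', p)) :
      WinningFor p (c, p.other)
/-- X in the center, O in a corner. -/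
def c8 : Config := fun x =>
  if x = ((0 : Fin 3), (2 : Fin 3)) then some Player.O
  else if x = ((1 : Fin 3), (1 : Fin 3)) then some Player.X
  else none


namespace PicAux

def pv : Option Player → ℕ
  | none => 0
  | some Player.X => 1
  | some Player.O => 2

def pw : ℕ → Option Player
  | 1 => some Player.X
  | 2 => some Player.O
  | _ => none

lemma pw_pv (o : Option Player) : pw (pv o) = o := by
  rcases o with _ | p
  · rfl
  · cases p <;> rfl

lemma pv_lt (o : Option Player) : pv o < 3 := by
  rcases o with _ | p
  · decide
  · cases p <;> decide

def enc (c : Config) : ℕ :=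
  pv (c (0,0)) + 3 * pv (c (0,1)) + 9 * pv (c (0,2)) + 27 * pv (c (1,0)) +
  81 * pv (c (1,1)) + 243 * pv (c (1,2)) + 729 * pv (c (2,0)) +
  2187 * pv (c (2,1)) + 6561 * pv (c (2,2))

def dec (n : ℕ) : Config := fun x => pw (n / 3 ^ (x.1.val * 3 + x.2.val) % 3)

lemma enc_lt (c : Config) : enc c < 19683 := by
  have h0 := pv_lt (c (0,0)); have h1 := pv_lt (c (0,1)); have h2 := pv_lt (c (0,2))
  have h3 := pv_lt (c (1,0)); have h4 := pv_lt (c (1,1)); have h5 := pv_lt (c (1,2))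
  have h6 := pv_lt (c (2,0)); have h7 := pv_lt (c (2,1)); have h8 := pv_lt (c (2,2))
  unfold enc; omega

lemma dec_enc (c : Config) : dec (enc c) = c := by
  have h0 := pv_lt (c (0,0)); have h1 := pv_lt (c (0,1)); have h2 := pv_lt (c (0,2))
  have h3 := pv_lt (c (1,0)); have h4 := pv_lt (c (1,1)); have h5 := pv_lt (c (1,2))
  have h6 := pv_lt (c (2,0)); have h7 := pv_lt (c (2,1)); have h8 := pv_lt (c (2,2))
  funext x
  have hx : x = ((0:Fin 3),(0:Fin 3)) ∨ x = (0,1) ∨ x = (0,2) ∨ x = (1,0) ∨ x = (1,1) ∨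
      x = (1,2) ∨ x = (2,0) ∨ x = (2,1) ∨ x = (2,2) := by
    revert x; decide
  rcases hx with rfl|rfl|rfl|rfl|rfl|rfl|rfl|rfl|rfl
  · rw [show c (0,0) = pw (pv (c (0,0))) from (pw_pv _).symm]
    show pw (enc c / 1 % 3) = _
    congr 1
    unfold enc
    omega
  · rw [show c (0,1) = pw (pv (c (0,1))) from (pw_pv _).symm]
    show pw (enc c / 3 % 3) = _
    congr 1
    unfold enc
    omega
  · rw [show c (0,2) = pw (pv (c (0,2))) from (pw_pv _).symm]
    show pw (enc c / 9 % 3) = _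
    congr 1
    unfold enc
    omega
  · rw [show c (1,0) = pw (pv (c (1,0))) from (pw_pv _).symm]
    show pw (enc c / 27 % 3) = _
    congr 1
    unfold enc
    omega
  · rw [show c (1,1) = pw (pv (c (1,1))) from (pw_pv _).symm]
    show pw (enc c / 81 % 3) = _
    congr 1
    unfold enc
    omega
  · rw [show c (1,2) = pw (pv (c (1,2))) from (pw_pv _).symm]
    show pw (enc c / 243 % 3) = _
    congr 1
    unfold enc
    omega
  · rw [show c (2,0) = pw (pv (c (2,0))) from (pw_pv _).symm]
    show pw (enc c / 729 % 3) = _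
    congr 1
    unfold enc
    omega
  · rw [show c (2,1) = pw (pv (c (2,1))) from (pw_pv _).symm]
    show pw (enc c / 2187 % 3) = _
    congr 1
    unfold enc
    omega
  · rw [show c (2,2) = pw (pv (c (2,2))) from (pw_pv _).symm]
    show pw (enc c / 6561 % 3) = _
    congr 1
    unfold enc
    omega

instance decAdj (a b : Cell) : Decidable (adjacent a b) := by
  unfold adjacent; infer_instance

instance decThree (c : Config) (p : Player) : Decidable (threeInARow c p) := by
  unfold threeInARow; infer_instance

def cellsL : List Cell :=
  [(0,0),(0,1),(0,2),(1,0),(1,1),(1,2),(2,0),(2,1),(2,2)]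

lemma mem_cellsL (x : Cell) : x ∈ cellsL := by revert x; decide

def movesL (t : Player) (c : Config) : List Config :=
  if stoneCount c t < 3 then
    (cellsL.filter fun x => decide (c x = none)).map fun x => Function.update c x (some t)
  else
    cellsL.flatMap fun x => cellsL.filterMap fun y =>
      if c x = some t ∧ c y = none ∧ adjacent x y then
        some (Function.update (Function.update c x none) y (some t))
      else none

lemma move_iff (t : Player) (c c' : Config) : Move t c c' ↔ c' ∈ movesL t c := by
  unfold Move movesL
  by_cases h : stoneCount c t < 3
  · rw [if_pos h]
    simp only [List.mem_map, List.mem_filter, decide_eq_true_eq]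
    constructor
    · rintro (⟨-, x, hx, rfl⟩ | ⟨h3, -⟩)
      · exact ⟨x, ⟨mem_cellsL x, hx⟩, rfl⟩
      · omega
    · rintro ⟨x, ⟨-, hx⟩, rfl⟩
      exact Or.inl ⟨h, x, hx, rfl⟩
  · rw [if_neg h]
    simp only [List.mem_flatMap, List.mem_filterMap]
    constructor
    · rintro (⟨h3, -⟩ | ⟨-, x, y, h1, h2, h3, rfl⟩)
      · omega
      · exact ⟨x, mem_cellsL x, y, mem_cellsL y, by rw [if_pos ⟨h1, h2, h3⟩]⟩
    · rintro ⟨x, -, y, -, hy⟩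
      split_ifs at hy with hc
      all_goals simp only [Option.some.injEq, reduceCtorEq] at hy
      exact Or.inr ⟨by omega, x, y, hc.1, hc.2.1, hc.2.2, hy.symm⟩

def msk : ℕ := 0x80000000000000000000000000000000000000000000000000000000000000000000000000000000000000000000000000000000000000000000000000000000000000000000000000000000000000000000000000000000000000000000000000000000000080000000000000000000000000000000000000080000000000000000000000000000000000000000000000000000000000000000000880000000000040000000000000000000000000080000000000000000000000000000000000000000000000000000000000000000000000000000000000000000000000000000800080000000000000000000000800080000000000000000000000000000000000000000400000000c00880000000000000000000000000000000000000800000000000800080000000000800000000c000c00000000000000000000000008008c0000000c80080000000000800080000000000800000000c000c0000000000840080000000c000c0000000080000000000000000000000000000000000000000000000000000000000000000000000000000000000000000000000000000000000000000000000000000000000000000000000c00000000000000000000000000000000000000000000000000000000000000000000000800000800000000000000000000000000000000000000c00c80000000000000000000800000000000c00000c000000000000000000000000000000008c08000c0000000000000000080000000000000000000000000000000000000000000000000000000000000000000000000000000000000000000000000000000000000000000000000000000000000000000000800cc00000000008000000000000c00000008000004000000000000000000000000000000000808000800000000000000000800000000000000000008c00c00000004000800000800800000000000808000c0000800000000000040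080000000000080080000000080000000000000000000000000000000000000000000000000000000000000000000000000000000000000000400840000000880080000000000000000000000880080000000000000000000000000000000000000c008c0000000880080000000000400800000000000000000000800080000000000880000000000800080000000080000000000000000000000000000880080000000000000000000000880000000000800080000000040000000000000000000000000080000000000000000000000000000000000000000000000000000000000000000000000000000000000000000000000000000000000000000000000000000000000000000000000000000000800c80000000000000000000000080000000c000008000000000000000000000000000000008800000c00000000000000000000000000000000000008c00c00000008000000000000000000000008c00000c00000000000000000800800000000000800800000000000000000000000000000000000000000000000000000000000000000000000000000000000000000000000000000000000000000000000000000000000000000000000000000000000000000000800800008808000c00000400400000000008c00000c00000000000000000800800000000000c0080000000000000000000000000000000000000000000000000000080000000000000000000000080080000000080080000000000081000000000000000000000000000000000000000000000000000000000000000000000000000000000000000000000000000000000000000000000000000000000000000000000000000000000000000000000000000000000000000000000000000000000000000000000000000000000000000000000000000000000000000000000000000000000000000000000000000000000000000000000000000000000000000000000000000000000000000000000000000000000000000000000000000000000000000000000008000000000000000000000000000000000000000000400800000000000000800000000000000000000000c0c000000000800480000000000c08000000808088000000000000000000000000000000000800000000000000000000000000000000000000000000000000000800000c0000000000000000000000000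0000000000000000840000800000000000800000000000000c00000c00000000000000000000000000000000c8080008000000000000800000800000000000000000000000000000000080000000000000000000000000080080000000000080c00000000c00c000000000480000000800008008000000008000000000000000000000000c00000000000cc000000000000040000080000000000000000000800000000000088000000000000800000000000c000000000000000000000000000c8000000800008000000000000080000000000000800000000000c80000000000000000000000000c000000000000000000000000000000000000000000000000000c00000000800cc0000000000000000000000000000000000000c0c000000000000000000000000808000000c0c088000000000000000000000000000000000000000000000000000000000000000000000000000000000000000000000000000000000000000000000000000000000000000000000000000000000000000000000000000000000000000000000000000000000000000000000000000000000000000000000000000000000000000000000000000000000000000000000000000000000000000000000000000000000000000000000000000000000000000000000000000000000000000000000000000000000000000000000000000000000000000000000000000000000000000000000000000000000000000000000000000000000000000000000000000000000000000000000000000000000000000000000000000000000000000000000000000000000000000000000000000000000000000000000000000000000000000000000000000000000000000000000000000000008000000000000000000000000008000000000000000000000000000000000000000000000000000000000000000000000000000000000000000000000000000000000800000000000000000000000000000000000000000080000000000000000000000000000000000000800000000000000000000000000808000000000000000000000000000000000000000000000000000000000000000000000000800c80000000cc008000000000000000000000000080c000000c0c008000000000000000000000c0c0080000000880000000000000000000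00000000000000000000000000000000000000000000000000000000000000000000000000000000000000000000000000000000000000000000000000000000800000000000000000000000000000000000000000000000000000000000000000000000000000000000000000000000000000000000000000000000000000000000000000000000000000000000000000000000000008000000000000000000000000008000000000000000000000000000000000000000000000000000000000000000000000000000000000000000000000000000000000000000000000000000000000000000000000000000000000080000000000000000000000000000000000000000000000000000000000008000000000000000000000000000000000000000000000000000000000000000000000000000000000000000000000000000000000004800000000008000000000000000000000000008000000000000000000000000000080000000000000000000000000000000000000800800000000000000000000000008000000000000000000000000000000000000000000000000000000000000000000000000000000000000000000000000000000000008000000000008120000000000000000000000000000000000000000000000000000000000000000000000000000000000000000000000000000000000000000000000000000000000000000000000000000000000000000000000000000000000000000000000000000000000000000000000000000000000000000000000000000008008000000000000000000000000000000000008000000000000000000000000000000000000000000000000000000000000000000008000000000004000000000000000000000000008000000000000000000000000000000000000000000000000000000000000000000000000800000000000804000800000008000000000000000000800008008000000008000000000000000800480000c00000008000c80008008000000c0000080000000000000000000800000000000088000004000000800000800000c00000000000000000088004000080000c00c00000000c000000000c8000008000000800000400000c80000000000008008000000000c0080000000000000000000000000000000000000000000000000000000000000000000008000000004800080040000800040000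00000000000000000080008000000000000000000000000000000000000c8000800c00008000000000000048000008000000000000000000880000000000008000000000000800000000000000000000000000000000000000000000c000000000000000000000000000000000008800000000000090000000000000000000000000000000000000000000000000000000000000000000000000c00c80000000cc0080000000000000000000000000408000000c0808000000000000000000000080c088000000088000000000000000000000000000000000000000800000000000000000000000000000000000000000000000000000000000000000000000000000000000000000000000000000000000800000000000088000000000000000000000000000000000000000000000000000000000000000000000000000000000000000000000000000000000000000000000000000000000000000000000000000000000000000000000000000000000000000000000000000000000000000000000000000000000000000000000000000000000000000000000000000000000000000000000000000800000000000000000000000000000000000000000000000080000000000000000000000000000000000000000000000000000000000808000000000000000000000000000000000000000000000000000000000000000000000000000000000000000000000000000000000008800000000000000000000000000000000000000000000000000000000000000000840000080000000000000000000000000000000400800000000000000000000000800000000000080000000000000000000000000000000000000000080000000000000000000000000000000000000000000000000000800000000000090020000000000000000000000000000000000000000000000000000000000000000000000880000000000000000000000000000000000000c0c00800000008800000000000000000000000008c0000000000000000000000000000000000000004080880000000800000000000000000000000000000000000000000000000000000000000000000000000000000000000000000000000000000000000440000000000000000000000000000000000000000000000000000000000000000000000000000000000000000000000000000000000000000000000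0000000000000000000000000000000000000000080000000000000000000000000000000000000000000000000000000000000000008000004000000000000000000000000000000080080000000000000000000000000800000000000000000000000000000000000000000000000000000008000000000000000000000000000000000000000000000000000800000000000812000000000000000000000000000000000000000000000000000000000000000000000000000000000000000000000000000000000089000000000000000000000000000000000000000000000000000000000000000000000000000000000000000000000000000000000089000000000000000000000000002000000000000000000000000000000000000000000000000000000000000000000000000000000000000000000000000000000000002000000000002240000000000000000000000000000000000000000000000000

def memb : Config → Player → Bool
  | c, Player.X => msk.testBit (2 * enc c)
  | c, Player.O => msk.testBit (2 * enc c + 1)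

def chk (n : ℕ) : Bool :=
  (if msk.testBit (2 * n) then
     (movesL Player.X (dec n)).all fun c' =>
        !(decide (threeInARow c' Player.X)) && msk.testBit (2 * enc c' + 1)
   else true) &&
  (if msk.testBit (2 * n + 1) then
     ((movesL Player.O (dec n)).isEmpty ||
       (movesL Player.O (dec n)).any fun c' =>
          decide (threeInARow c' Player.O) || msk.testBit (2 * enc c'))
   else true)

set_option maxRecDepth 10000 in
set_option maxHeartbeats 8000000 in
lemma chk_all2 : ∀ a < 27, ∀ b < 729, chk (729 * a + b) = true := by decide

lemma chk_all : ∀ n < 19683, chk n = true := by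
  intro n hn
  have h : n = 729 * (n / 729) + n % 729 := (Nat.div_add_mod n 729).symm
  rw [h]
  exact chk_all2 (n / 729) (by omega) (n % 729) (by omega)

lemma P1 {c c' : Config} (hm : memb c Player.X = true) (h : Move Player.X c c') :
    ¬ threeInARow c' Player.X ∧ memb c' Player.O = true := by
  have hb := chk_all (enc c) (enc_lt c)
  unfold chk at hb
  rw [dec_enc] at hb
  rw [Bool.and_eq_true] at hb
  have h1 := hb.1
  rw [if_pos (show msk.testBit (2 * enc c) = true from hm)] at h1
  rw [List.all_eq_true] at h1
  have h2 := h1 c' ((move_iff _ _ _).mp h)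
  rw [Bool.and_eq_true, Bool.not_eq_true', decide_eq_false_iff_not] at h2
  exact ⟨h2.1, h2.2⟩

lemma P2 {c : Config} (hm : memb c Player.O = true) (hne : ∃ c', Move Player.O c c') :
    ∃ c', Move Player.O c c' ∧ (threeInARow c' Player.O ∨ memb c' Player.X = true) := by
  have hb := chk_all (enc c) (enc_lt c)
  unfold chk at hb
  rw [dec_enc] at hb
  rw [Bool.and_eq_true] at hb
  have h1 := hb.2
  rw [if_pos (show msk.testBit (2 * enc c + 1) = true from hm)] at h1
  rw [Bool.or_eq_true] at h1
  obtain ⟨d, hd⟩ := hne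
  rcases h1 with h1 | h1
  · rw [List.isEmpty_iff] at h1
    have := (move_iff _ _ _).mp hd
    rw [h1] at this
    exact absurd this (by simp)
  · rw [List.any_eq_true] at h1
    obtain ⟨c', hc', hp⟩ := h1
    rw [Bool.or_eq_true, decide_eq_true_eq] at hp
    exact ⟨c', (move_iff _ _ _).mpr hc', hp⟩

lemma not_win_of_memb : ∀ s, WinningFor Player.X s → memb s.1 s.2 = false := by
  intro s hw
  induction hw with
  | moveWin c c' h hw3 =>
      by_contra hb
      rw [Bool.not_eq_false] at hb
      exact (P1 hb h).1 hw3
  | moveStep c c' h _ ih =>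
      by_contra hb
      rw [Bool.not_eq_false] at hb
      have := (P1 hb h).2
      rw [show memb c' Player.O = memb (c', Player.X.other).1 (c', Player.X.other).2 from rfl,
        ih] at this
      exact absurd this (by simp)
  | forced c hne hnowin _ ih =>
      by_contra hb
      rw [Bool.not_eq_false] at hb
      have hm : memb c Player.O = true := hb
      obtain ⟨c', hmv, hor⟩ := P2 hm hne
      rcases hor with h3 | h1
      · exact hnowin c' hmv h3
      · have := ih c' hmv
        rw [h1] at this
        exact absurd this (by simp)

end PicAux

/-- X cannot win from the two-stone position with X in the center and O in a corner. -/
theorem picaria_X_center_O_corner : ¬ WinningFor Player.X (c8, Player.X) := by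
  intro h
  have h1 := PicAux.not_win_of_memb _ h
  have h2 : PicAux.memb c8 Player.X = true := by decide
  rw [h2] at h1
  exact absurd h1 (by simp)
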